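/- arXiv:math/0408300 — 2 statements merged into one kernel-verified Lean document; each statement's English description precedes it below -/
import Mathlib

section
/- Let A be a complex Banach algebra (not necessarily unital) and a ∈ L(A). Then a is an isolated point of L(A) (in the norm topology of A) if and only if a ∈ I(A), a lies in the center of A (a*x = x*a for all x ∈ A), and every b ∈ L(A) with b³ = a satisfies b = a. -/
/-!
Write `L` for the set of `a` with `a x a y = a x y` for all `x, y`. If `a ∈ L` and `d` satisfies
`a x d y = 0`, `d x a y = d x y` and `d x d y = 0`, then the whole line `a + t d` lies in `L`, so
such a `d` vanishes when `a` is isolated. Left annihilators of `A` are such `d`, so there are none,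
and then `a x a = a x` for all `x`. With this, `a² - a`, `z a - a z` and `b - a` (for `b ∈ L` with
`b³ = a`) are again such `d`: `a` is idempotent, central and its own only cube root in `L`.

Conversely, for `a` idempotent and central, `a + c` is a cube root of `a` in `L` for every left
annihilator `c`, so the cube-root condition rules out left annihilators, and then every `b ∈ L`
satisfies `b x b = b x`. For `b ∈ L` close to `a`, the idempotent `a - a b` has norm `< 1`, hence
vanishes; then `d = b - a` satisfies `d x d = d x` with `‖d‖ < 1`, which forces `d x = 0` for
all `x`, i.e. `d = 0`.
-/

def endomorphicLeft (R : Type*) [Mul R] : Set R :=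
  {a | ∀ x y : R, a * x * a * y = a * x * y}

def LeftFaithful (R : Type*) [Mul R] [Zero R] : Prop :=
  ∀ c : R, (∀ x, c * x = 0) → c = 0

def IsolatedIn {E : Type*} [Norm E] [Sub E] (S : Set E) (a : E) : Prop :=
  ∃ ε > (0 : ℝ), ∀ b ∈ S, ‖b - a‖ < ε → b = a

section Algebra

variable {R : Type*} [NonUnitalRing R]

theorem LeftFaithful.mul_mul_self_eq (hR : LeftFaithful R) {a : R}
    (ha : a ∈ endomorphicLeft R) (x : R) : a * x * a = a * x :=
  sub_eq_zero.mp <| hR _ fun y => by rw [sub_mul, ha x y, sub_self]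

theorem add_smul_mem_endomorphicLeft {𝕜 : Type*} [Semiring 𝕜] [Module 𝕜 R]
    [IsScalarTower 𝕜 R R] [SMulCommClass 𝕜 R R] {a d : R} (ha : a ∈ endomorphicLeft R)
    (had : ∀ x y, a * x * d * y = 0) (hda : ∀ x y, d * x * a * y = d * x * y)
    (hdd : ∀ x y, d * x * d * y = 0) (t : 𝕜) : a + t • d ∈ endomorphicLeft R := by
  intro x y
  simp only [add_mul, mul_add, smul_mul_assoc, mul_smul_comm, ha x y, had, hda, hdd,
    smul_zero, add_zero]

theorem leftFaithful_of_forall_cube_eq {a : R} (ha : a ∈ endomorphicLeft R) (hidem : a * a = a)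
    (hcomm : ∀ x, a * x = x * a) (hcube : ∀ b ∈ endomorphicLeft R, b * b * b = a → b = a) :
    LeftFaithful R := by
  intro c hc
  have hmem : a + c ∈ endomorphicLeft R := by
    intro x y
    simp only [add_mul, mul_add, hc, mul_assoc (a * x) c y, ha x y, mul_zero, add_zero]
  have hac : a * c = 0 := by rw [hcomm, hc]
  have hcube' : (a + c) * (a + c) * (a + c) = a := by
    simp only [add_mul, mul_add, hc, hac, hidem, add_zero]
  simpa using hcube _ hmem hcube'

end Algebra

section Norm

variable {A : Type*} [NonUnitalNormedRing A]

theorem eq_zero_of_mul_eq_self_of_norm_lt_one {y d : A} (h : y * d = y) (hd : ‖d‖ < 1) :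
    y = 0 := by
  by_contra hy
  have hpos : 0 < ‖y‖ := norm_pos_iff.mpr hy
  have : ‖y‖ ≤ ‖y‖ * ‖d‖ := by simpa only [h] using norm_mul_le y d
  nlinarith

theorem mul_eq_left_of_norm_sub_lt {a b : A} (hR : LeftFaithful A) (hb : b ∈ endomorphicLeft A)
    (hidem : a * a = a) (hcomm : ∀ x, a * x = x * a) (hab : ‖a‖ * ‖a - b‖ < 1) : a * b = a := by
  have haba : a * b * a = a * b := by rw [← hcomm, ← mul_assoc, hidem]
  have habb : a * b * b = a * b := by rw [hcomm b]; exact hR.mul_mul_self_eq hb a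
  have hidem_sub : (a - a * b) * (a - a * b) = a - a * b := by
    rw [sub_mul, mul_sub, mul_sub, hidem, ← mul_assoc, hidem, haba, ← mul_assoc, haba, habb,
      sub_self, sub_zero]
  have hnorm : ‖a - a * b‖ < 1 := by
    calc ‖a - a * b‖ = ‖a * (a - b)‖ := by rw [mul_sub, hidem]
      _ ≤ ‖a‖ * ‖a - b‖ := norm_mul_le _ _
      _ < 1 := hab
  exact (sub_eq_zero.mp (eq_zero_of_mul_eq_self_of_norm_lt_one hidem_sub hnorm)).symm

theorem isolatedIn_endomorphicLeft {a : A} (hR : LeftFaithful A) (hidem : a * a = a)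
    (hcomm : ∀ x, a * x = x * a) : IsolatedIn (endomorphicLeft A) a := by
  refine ⟨(‖a‖ + 1)⁻¹, by positivity, fun b hb hba => ?_⟩
  have hsmall : ‖b - a‖ * (‖a‖ + 1) < 1 := by
    rwa [← lt_inv_mul_iff₀' (by positivity), mul_one]
  have hab : a * b = a := mul_eq_left_of_norm_sub_lt hR hb hidem hcomm <| by
    rw [norm_sub_rev]; nlinarith [norm_nonneg a, norm_nonneg (b - a)]
  have hdxa : ∀ x, (b - a) * x * a = 0 := fun x => by
    rw [mul_assoc, ← hcomm, ← mul_assoc, sub_mul, ← hcomm, hab, hidem, sub_self, zero_mul]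
  have hdxb : ∀ x, (b - a) * x * b = (b - a) * x := fun x => by
    rw [sub_mul, sub_mul, hR.mul_mul_self_eq hb, hcomm x, mul_assoc, hab]
  refine sub_eq_zero.mp <| hR _ fun x => eq_zero_of_mul_eq_self_of_norm_lt_one (d := b - a) ?_ ?_
  · rw [mul_sub, hdxb, hdxa, sub_zero]
  · nlinarith [norm_nonneg a, norm_nonneg (b - a)]

end Norm

theorem eq_zero_of_isolatedIn_of_forall_add_smul_mem {𝕜 E : Type*} [NontriviallyNormedField 𝕜]
    [NormedAddCommGroup E] [NormedSpace 𝕜 E] {S : Set E} {a d : E} (hiso : IsolatedIn S a)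
    (hline : ∀ t : 𝕜, a + t • d ∈ S) : d = 0 := by
  obtain ⟨ε, hε, hiso⟩ := hiso
  by_contra hd
  have hdpos : 0 < ‖d‖ := norm_pos_iff.mpr hd
  obtain ⟨t, htpos, ht⟩ := NormedField.exists_norm_lt 𝕜 (div_pos hε hdpos)
  have hnear : ‖a + t • d - a‖ < ε := by
    rwa [add_sub_cancel_left, norm_smul, ← lt_div_iff₀ hdpos]
  have htd : t • d = 0 := add_eq_left.mp (hiso _ (hline t) hnear)
  exact hd ((smul_eq_zero.mp htd).resolve_left (norm_pos_iff.mp htpos))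

/-- The `d` quantified over are the directions with `a + t • d ∈ endomorphicLeft R` for every
scalar `t` (`add_smul_mem_endomorphicLeft`). -/
def EndoLeftRigid {R : Type*} [NonUnitalRing R] (a : R) : Prop :=
  ∀ d : R, (∀ x y, a * x * d * y = 0) → (∀ x y, d * x * a * y = d * x * y) →
    (∀ x y, d * x * d * y = 0) → d = 0

theorem IsolatedIn.endoLeftRigid (𝕜 : Type*) {A : Type*} [NontriviallyNormedField 𝕜]
    [NonUnitalNormedRing A] [NormedSpace 𝕜 A] [IsScalarTower 𝕜 A A] [SMulCommClass 𝕜 A A]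
    {a : A} (hiso : IsolatedIn (endomorphicLeft A) a) (ha : a ∈ endomorphicLeft A) :
    EndoLeftRigid a := fun _ had hda hdd =>
  eq_zero_of_isolatedIn_of_forall_add_smul_mem hiso
    (add_smul_mem_endomorphicLeft (𝕜 := 𝕜) ha had hda hdd)

namespace EndoLeftRigid

variable {R : Type*} [NonUnitalRing R] {a : R}

theorem leftFaithful (h : EndoLeftRigid a) : LeftFaithful R := fun c hc =>
  h c (fun x y => by rw [mul_assoc, hc, mul_zero]) (fun x y => by simp only [hc, zero_mul])
    (fun x y => by simp only [hc, zero_mul])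

theorem eq_zero_of_forall (h : EndoLeftRigid a) {d : R} (had : ∀ x, a * x * d = 0)
    (hda : ∀ x, d * x * a = d * x) (hdd : ∀ x, d * x * d = 0) : d = 0 :=
  h d (fun x y => by rw [had, zero_mul]) (fun x y => by rw [hda]) (fun x y => by rw [hdd, zero_mul])

theorem mul_self_eq (h : EndoLeftRigid a) (ha : a ∈ endomorphicLeft R) : a * a = a := by
  have haxa := h.leftFaithful.mul_mul_self_eq ha
  have hda : ∀ x, (a * a - a) * x * a = (a * a - a) * x := fun x => by
    simp only [sub_mul]
    rw [mul_assoc a a x, haxa, haxa]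
  refine sub_eq_zero.mp <| h.eq_zero_of_forall (fun x => ?_) hda (fun x => ?_)
  · rw [mul_sub, ← mul_assoc, haxa, haxa, sub_self]
  · rw [mul_sub, ← mul_assoc, hda, hda, sub_self]

theorem commute (h : EndoLeftRigid a) (ha : a ∈ endomorphicLeft R) (z : R) :
    a * z = z * a := by
  have haxa := h.leftFaithful.mul_mul_self_eq ha
  have hda : ∀ x, (z * a - a * z) * x * a = (z * a - a * z) * x := fun x => by
    simp only [sub_mul]
    rw [mul_assoc z a x, mul_assoc z (a * x) a, haxa, mul_assoc a z x, haxa]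
  refine (sub_eq_zero.mp <| h.eq_zero_of_forall (fun x => ?_) hda (fun x => ?_)).symm
  · rw [mul_sub, ← mul_assoc, ← mul_assoc, haxa, mul_assoc a x z, haxa, ← mul_assoc, sub_self]
  · set d := z * a - a * z
    calc d * x * (z * a - a * z) = d * (x * z) * a - d * x * a * z := by noncomm_ring
      _ = 0 := by rw [hda, hda, mul_assoc d x z, sub_self]

theorem eq_of_cube_eq (h : EndoLeftRigid a) (ha : a ∈ endomorphicLeft R) {b : R}
    (hb : b ∈ endomorphicLeft R) (hcube : b * b * b = a) : b = a := by
  have haxa := h.leftFaithful.mul_mul_self_eq ha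
  have hbxb := h.leftFaithful.mul_mul_self_eq hb
  have haxb : ∀ x, a * x * b = a * x := fun x => by
    simpa only [← hcube, mul_assoc] using hbxb (b * b * x)
  have hbxa : ∀ x, b * x * a = b * x := fun x => by
    rw [← hcube, ← mul_assoc, ← mul_assoc, hbxb, hbxb, hbxb]
  have hda : ∀ x, (b - a) * x * a = (b - a) * x := fun x => by
    rw [sub_mul, sub_mul, hbxa, haxa]
  refine sub_eq_zero.mp <| h.eq_zero_of_forall (fun x => ?_) hda (fun x => ?_)
  · rw [mul_sub, haxb, haxa, sub_self]
  · rw [mul_sub, hda, sub_mul, sub_mul, hbxb, haxb, sub_self]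

end EndoLeftRigid

theorem stmt_13_general {A : Type*} [NonUnitalNormedRing A] [NormedSpace ℂ A]
    [IsScalarTower ℂ A A] [SMulCommClass ℂ A A]
    {L : Set A}
    (hL : L = {a : A | ∀ x y : A, a * x * a * y = a * x * y})
    (a : A) (haL : a ∈ L) :
    (∃ ε > (0 : ℝ), ∀ b ∈ L, ‖b - a‖ < ε → b = a) ↔
      (a * a = a ∧ (∀ x : A, a * x = x * a) ∧
        ∀ b ∈ L, b * b * b = a → b = a) := by
  change L = endomorphicLeft A at hL
  subst hL
  change IsolatedIn _ a ↔ _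
  refine ⟨fun hiso => ?_, fun ⟨hidem, hcomm, hcube⟩ => ?_⟩
  · have h := hiso.endoLeftRigid ℂ haL
    exact ⟨h.mul_self_eq haL, h.commute haL, fun b hb => h.eq_of_cube_eq haL hb⟩
  · exact isolatedIn_endomorphicLeft (leftFaithful_of_forall_cube_eq haL hidem hcomm hcube)
      hidem hcomm

/-- In a complex (not necessarily unital) Banach algebra `A`, an element `a ∈ L(A)`
is isolated in `L(A)` iff `a` is idempotent, central, and every `b ∈ L(A)` with
`b³ = a` equals `a`. -/
theorem stmt_13 {A : Type*} [NonUnitalNormedRing A] [NormedSpace ℂ A]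
    [IsScalarTower ℂ A A] [SMulCommClass ℂ A A] [CompleteSpace A]
    {L : Set A}
    (hL : L = {a : A | ∀ x y : A, a * x * a * y = a * x * y})
    (a : A) (haL : a ∈ L) :
    (∃ ε > (0 : ℝ), ∀ b ∈ L, ‖b - a‖ < ε → b = a) ↔
      (a * a = a ∧ (∀ x : A, a * x = x * a) ∧
        ∀ b ∈ L, b * b * b = a → b = a) :=
  stmt_13_general hL a haL
end

section
/- Let A be a complex Banach algebra (not necessarily unital) and a ∈ L(A). If a is not in the center of A (i.e. a*x ≠ x*a for some x ∈ A) or a is not idempotent (a² ≠ a), then the connected component of a in the subspace L(A) is unbounded in norm. -/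
/-!
If `a ∈ L(A)` and `v ≠ 0` satisfies `a x v y = 0`, `v x a y = v x y` and `v x v y = 0`, then the
line `a + ℝ v` lies in `L(A)`; it is connected and unbounded, so the component of
`a` is unbounded. Such a `v` exists: if `a u a ≠ a u` for some `u`, then `a u a - a u` is a
nonzero left annihilator of `A`. Otherwise `a w a = a w` for all `w`, and the commutator
`a x - x a` or the idempotency defect `a a - a` is a nonzero direction.
-/

section Algebra

variable {A : Type*}

def IsEndomorphicLeft [Mul A] (a : A) : Prop :=
  ∀ x y : A, a * x * a * y = a * x * y

structure IsLineDirection [Mul A] [Zero A] (a v : A) : Prop where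
  mul_left_eq_zero : ∀ x y : A, a * x * v * y = 0
  mul_right_eq : ∀ x y : A, v * x * a * y = v * x * y
  mul_self_eq_zero : ∀ x y : A, v * x * v * y = 0

theorem IsEndomorphicLeft.add_smul {R : Type*} [NonUnitalNonAssocSemiring A] [Monoid R]
    [DistribMulAction R A] [IsScalarTower R A A] [SMulCommClass R A A] {a v : A}
    (ha : IsEndomorphicLeft a) (hv : IsLineDirection a v) (t : R) :
    IsEndomorphicLeft (a + t • v) := by
  intro x y
  simp only [add_mul, mul_add, smul_mul_assoc, mul_smul_comm]
  rw [ha, hv.mul_self_eq_zero, hv.mul_left_eq_zero, hv.mul_right_eq]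
  simp only [smul_zero, add_zero]

variable [NonUnitalRing A]

theorem isLineDirection_of_mul_eq_zero {a v : A} (hv : ∀ z, v * z = 0) :
    IsLineDirection a v where
  mul_left_eq_zero x y := by rw [mul_assoc, hv, mul_zero]
  mul_right_eq x y := by rw [hv, zero_mul, zero_mul]
  mul_self_eq_zero x y := by rw [hv, zero_mul, zero_mul]

theorem IsEndomorphicLeft.mul_mul_sub_mul_mul {a : A} (ha : IsEndomorphicLeft a) (u z : A) :
    (a * u * a - a * u) * z = 0 := by
  rw [sub_mul, ha, sub_self]

theorem isLineDirection_of_mul_mul_eq {a v : A} (hl : ∀ w, a * w * v = 0)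
    (hr : ∀ w, v * w * a = v * w) (hsq : ∀ w, v * w * v = 0) : IsLineDirection a v where
  mul_left_eq_zero x y := by rw [hl, zero_mul]
  mul_right_eq x y := by rw [hr]
  mul_self_eq_zero x y := by rw [hsq, zero_mul]

/- In the next two proofs each `noncomm_ring` step writes the difference of the two sides as a
combination of instances of `ha` (or of `hr`), which the following rewrite kills. -/
theorem isLineDirection_mul_sub_mul {a : A} (ha : ∀ w, a * w * a = a * w) (s : A) :
    IsLineDirection a (a * s - s * a) := by
  have hr : ∀ w, (a * s - s * a) * w * a = (a * s - s * a) * w := fun w => calc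
    _ = (a * (s * w) * a - a * (s * w)) - s * (a * w * a - a * w) + (a * s - s * a) * w := by
      noncomm_ring
    _ = _ := by rw [ha, ha, sub_self, sub_self, mul_zero, sub_zero, zero_add]
  refine isLineDirection_of_mul_mul_eq (fun w => ?_) hr (fun w => ?_)
  · calc
      _ = (a * w * a - a * w) * s - (a * (w * s) * a - a * (w * s)) := by noncomm_ring
      _ = 0 := by rw [ha, ha, sub_self, sub_self, zero_mul, sub_zero]
  · calc
      _ = ((a * s - s * a) * w * a - (a * s - s * a) * w) * s
          - ((a * s - s * a) * (w * s) * a - (a * s - s * a) * (w * s)) := by noncomm_ring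
      _ = 0 := by rw [hr, hr, sub_self, sub_self, zero_mul, sub_zero]

theorem isLineDirection_mul_self_sub {a : A} (ha : ∀ w, a * w * a = a * w) :
    IsLineDirection a (a * a - a) := by
  have hr : ∀ w, (a * a - a) * w * a = (a * a - a) * w := fun w => calc
    _ = (a * (a * w) * a - a * (a * w)) - (a * w * a - a * w) + (a * a - a) * w := by
      noncomm_ring
    _ = _ := by rw [ha, ha, sub_self, sub_self, sub_zero, zero_add]
  refine isLineDirection_of_mul_mul_eq (fun w => ?_) hr (fun w => ?_)
  · calc
      _ = (a * w * a - a * w) * a := by noncomm_ring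
      _ = 0 := by rw [ha, sub_self, zero_mul]
  · calc
      _ = ((a * a - a) * w * a - (a * a - a) * w) * a := by noncomm_ring
      _ = 0 := by rw [hr, sub_self, zero_mul]

theorem IsEndomorphicLeft.exists_isLineDirection {a : A} (ha : IsEndomorphicLeft a)
    (h : (∃ x : A, a * x ≠ x * a) ∨ a * a ≠ a) : ∃ v ≠ 0, IsLineDirection a v := by
  by_cases habs : ∀ w, a * w * a = a * w
  · rcases h with ⟨x, hx⟩ | hidem
    · exact ⟨_, sub_ne_zero.mpr hx, isLineDirection_mul_sub_mul habs x⟩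
    · exact ⟨_, sub_ne_zero.mpr hidem, isLineDirection_mul_self_sub habs⟩
  · push Not at habs
    obtain ⟨u, hu⟩ := habs
    exact ⟨_, sub_ne_zero.mpr hu, isLineDirection_of_mul_eq_zero (ha.mul_mul_sub_mul_mul u)⟩

end Algebra

theorem exists_lt_norm_mem_connectedComponentIn_of_add_smul_mem {E : Type*}
    [NormedAddCommGroup E] [NormedSpace ℝ E] {S : Set E} {a v : E} (hv : v ≠ 0)
    (hS : ∀ t : ℝ, a + t • v ∈ S) (r : ℝ) : ∃ b ∈ connectedComponentIn S a, r < ‖b‖ := by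
  have hline : Set.range (fun t : ℝ => a + t • v) ⊆ connectedComponentIn S a :=
    (isPreconnected_range (by fun_prop)).subset_connectedComponentIn ⟨0, by simp⟩
      (Set.range_subset_iff.mpr hS)
  have hv : 0 < ‖v‖ := norm_pos_iff.mpr hv
  set t := (r + ‖a‖ + 1) / ‖v‖
  refine ⟨a + t • v, hline ⟨t, rfl⟩, ?_⟩
  calc r < t * ‖v‖ - ‖a‖ := by rw [div_mul_cancel₀ _ hv.ne']; linarith
    _ ≤ ‖t • v‖ - ‖a‖ := by rw [norm_smul, Real.norm_eq_abs]; gcongr; exact le_abs_self t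
    _ ≤ ‖a + t • v‖ := by rw [add_comm]; exact norm_sub_le_norm_add _ _

theorem stmt_15_general {A : Type*} [NonUnitalNormedRing A] [NormedSpace ℂ A]
    [IsScalarTower ℂ A A] [SMulCommClass ℂ A A]
    {L : Set A}
    (hL : L = {a : A | ∀ x y : A, a * x * a * y = a * x * y})
    (a : A) (haL : a ∈ L)
    (h : (∃ x : A, a * x ≠ x * a) ∨ a * a ≠ a) :
    ∀ r : ℝ, ∃ b ∈ connectedComponentIn L a, r < ‖b‖ := by
  subst hL
  have ha : IsEndomorphicLeft a := haL
  obtain ⟨v, hv0, hv⟩ := ha.exists_isLineDirection h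
  refine exists_lt_norm_mem_connectedComponentIn_of_add_smul_mem hv0 fun t => ?_
  rw [← Complex.coe_smul]
  exact ha.add_smul hv (t : ℂ)

/-- In a complex (not necessarily unital) Banach algebra `A`, if `a ∈ L(A)` is
non-central or non-idempotent, then the connected component of `a` in the subspace
`L(A)` is unbounded in norm. -/
theorem stmt_15 {A : Type*} [NonUnitalNormedRing A] [NormedSpace ℂ A]
    [IsScalarTower ℂ A A] [SMulCommClass ℂ A A] [CompleteSpace A]
    {L : Set A}
    (hL : L = {a : A | ∀ x y : A, a * x * a * y = a * x * y})
    (a : A) (haL : a ∈ L)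
    (h : (∃ x : A, a * x ≠ x * a) ∨ a * a ≠ a) :
    ∀ r : ℝ, ∃ b ∈ connectedComponentIn L a, r < ‖b‖ :=
  stmt_15_general hL a haL h
end
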